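/- Let X be a space and 𝒳 = {X_{M,α} : M ∈ ℳ, α < ω₁} a family of at most ω₁ many sets, each of cardinality ω₁, that is pairwise almost disjoint (distinct members meet in a countable set). Suppose for each M ∈ ℳ and α < ω₁, the set of complete accumulation points of X_{M,α} computed in M equals a fixed set H_M, and every subset of X_{M,α} of cardinality ω₁ has the same property regarding nonemptiness of complete accumulation points in M. Then there exist pairwise disjoint sets D_α ⊆ ⋃ℳ for α < ω₁ such that ⋃{H_M : M ∈ ℳ} ⊆ cl(D_α) for every α < ω₁. -/

import Mathlib

/-! Enumerate the index pairs `(m, α)` in order type at most `ω₁` and remove from each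
`F m α` its intersections with the earlier members. Only countably many points are removed,
so the complete accumulation points, hence the inclusions `H m ⊆ closure (D α)`, survive,
while the shrunken sets are pairwise disjoint; `D α` is the union over `m` of the shrunken
`F m α`. -/

open Cardinal

universe u

/-- The set of complete accumulation points of a size-ω₁ set `S` computed in the
subspace `M`. -/
def CAP {X : Type u} [TopologicalSpace X] (M S : Set X) : Set X :=
  {x ∈ M | ∀ U : Set X, IsOpen U → x ∈ U → ¬ (U ∩ S).Countable}

open Set

section CompleteAccumulation

variable {X : Type u} [TopologicalSpace X] {M S T : Set X}

theorem CAP_eq_of_subset_of_countable_diff (hTS : T ⊆ S) (hST : (S \ T).Countable) :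
    CAP M T = CAP M S := by
  ext x
  refine and_congr_right fun _ => forall₂_congr fun U _ => imp_congr_right fun _ => not_congr ?_
  refine ⟨fun hT => (hT.union hST).mono ?_, fun hS => hS.mono (inter_subset_inter_right U hTS)⟩
  rintro y ⟨hyU, hyS⟩
  by_cases hyT : y ∈ T
  exacts [Or.inl ⟨hyU, hyT⟩, Or.inr ⟨hyS, hyT⟩]

theorem CAP_subset_closure : CAP M S ⊆ closure S := by
  refine fun x hx => mem_closure_iff.2 fun U hU hxU => ?_
  by_contra hempty
  exact hx.2 U hU hxU (not_nonempty_iff_eq_empty.1 hempty ▸ countable_empty)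

end CompleteAccumulation

section EssentiallyDisjoint

variable {α : Type*}

theorem exists_pairwise_disjoint_countable_diff_of_countable_Iio {σ : Type*} [LinearOrder σ]
    {F : σ → Set α} (hIio : ∀ p : σ, (Iio p).Countable)
    (had : Pairwise fun p q => (F p ∩ F q).Countable) :
    ∃ G : σ → Set α, (∀ p, G p ⊆ F p) ∧ (∀ p, (F p \ G p).Countable) ∧
      Pairwise (Function.onFun Disjoint G) := by
  refine ⟨fun p => F p \ ⋃ q ∈ Iio p, F q, fun p => sdiff_subset, fun p => ?_, ?_⟩
  · rw [sdiff_sdiff_right_self, inter_iUnion₂]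
    exact (hIio p).biUnion fun q hq => had (ne_of_gt hq)
  · have hbefore : ∀ p q, q < p → Disjoint (F p \ ⋃ r ∈ Iio p, F r) (F q) := fun p q hqp =>
      disjoint_sdiff_left.mono_right (subset_biUnion_of_mem (u := F) (show q ∈ Iio p from hqp))
    intro p q hpq
    rcases hpq.lt_or_gt with h | h
    · exact ((hbefore q p h).mono_right sdiff_subset).symm
    · exact (hbefore p q h).mono_right sdiff_subset

theorem countable_Iio_toType_ord_aleph_one (t : (ℵ₁ : Cardinal.{u}).ord.ToType) :
    (Iio t).Countable := by
  rw [← le_aleph0_iff_set_countable, ← lt_aleph_one_iff]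
  simpa using mk_Iio_lt t (by simp)

theorem exists_pairwise_disjoint_countable_diff {σ : Type u} {F : σ → Set α} (hσ : #σ ≤ ℵ₁)
    (had : Pairwise fun p q => (F p ∩ F q).Countable) :
    ∃ G : σ → Set α, (∀ p, G p ⊆ F p) ∧ (∀ p, (F p \ G p).Countable) ∧
      Pairwise (Function.onFun Disjoint G) := by
  obtain ⟨e⟩ : Nonempty (σ ↪ (ℵ₁ : Cardinal.{u}).ord.ToType) := by
    rwa [← Cardinal.le_def, mk_toType, card_ord]
  let _ : LinearOrder σ := LinearOrder.lift' e e.injective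
  exact exists_pairwise_disjoint_countable_diff_of_countable_Iio
    (fun p => (countable_Iio_toType_ord_aleph_one (e p)).preimage e.injective) had

end EssentiallyDisjoint

theorem disjoint_dense_sets_of_ad_general {X : Type u} [TopologicalSpace X]
    {μ : Type u} (hμ : #μ ≤ aleph 1)
    {ι : Type u} (hι : #ι = aleph 1)
    (M : μ → Set X) (H : μ → Set X) (F : μ → ι → Set X)
    (hsub : ∀ m α, F m α ⊆ M m)
    (had : ∀ m α n β, (m, α) ≠ (n, β) → (F m α ∩ F n β).Countable)
    (hcap : ∀ m α, CAP (M m) (F m α) = H m) :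
    ∃ D : ι → Set X, (∀ α, D α ⊆ ⋃ m, M m) ∧
      Pairwise (Function.onFun Disjoint D) ∧
      ∀ α, (⋃ m, H m) ⊆ closure (D α) := by
  have hcard : #(μ × ι) ≤ ℵ₁ := by
    rw [mk_prod, lift_id, lift_id]
    exact mul_le_of_le (aleph0_le_aleph 1) hμ hι.le
  obtain ⟨G, hGF, hG_countable, hG_disj⟩ :=
    exists_pairwise_disjoint_countable_diff (F := fun p : μ × ι => F p.1 p.2) hcard
      fun p q hpq => had p.1 p.2 q.1 q.2 hpq
  refine ⟨fun α => ⋃ m, G (m, α), fun α => iUnion_mono fun m => (hGF _).trans (hsub m α),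
    fun α β hαβ => ?_, fun α => iUnion_subset fun m => ?_⟩
  · exact disjoint_iUnion_left.2 fun m => disjoint_iUnion_right.2 fun n =>
      hG_disj fun h => hαβ (congrArg Prod.snd h)
  · calc H m = CAP (M m) (G (m, α)) :=
          (hcap m α).symm.trans
            (CAP_eq_of_subset_of_countable_diff (hGF (m, α)) (hG_countable (m, α))).symm
      _ ⊆ closure (G (m, α)) := CAP_subset_closure
      _ ⊆ closure (⋃ m, G (m, α)) := closure_mono (subset_iUnion (fun m => G (m, α)) m)

theorem disjoint_dense_sets_of_ad {X : Type u} [TopologicalSpace X]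
    {μ : Type u} (hμ : #μ ≤ aleph 1)
    {ι : Type u} (hι : #ι = aleph 1)
    (M : μ → Set X) (H : μ → Set X) (F : μ → ι → Set X)
    (hsub : ∀ m α, F m α ⊆ M m)
    (hcard : ∀ m α, #↥(F m α) = aleph 1)
    (hdisj : ∀ m, Pairwise (Function.onFun Disjoint (F m)))
    (had : ∀ m α n β, (m, α) ≠ (n, β) → (F m α ∩ F n β).Countable)
    (hcap : ∀ m α, CAP (M m) (F m α) = H m)
    (happ : ∀ m α, ∀ Y ⊆ F m α, #↥Y = aleph 1 → (CAP (M m) Y).Nonempty) :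
    ∃ D : ι → Set X, (∀ α, D α ⊆ ⋃ m, M m) ∧
      Pairwise (Function.onFun Disjoint D) ∧
      ∀ α, (⋃ m, H m) ⊆ closure (D α) :=
  disjoint_dense_sets_of_ad_general hμ hι M H F hsub had hcap
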